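/- arXiv:2010.11357 — 4 statements merged into one kernel-verified Lean document; each statement's English description precedes it below -/
import Mathlib

section
/- Let g be simply-laced with diagram automorphism group generated by τ of order m acting on the Cartan subalgebra h, and let ι: X_*(T) → (h^σ)^∨ be the map ι(λ)(h) = (λ,h) given by the normalized Killing form (θ^∨,θ^∨)=2, where σ is a standard automorphism. Then for every vertex i of the Dynkin diagram, ι(ω̌_i) = λ_{η(i)}, i.e. ι sends the fundamental coweight ω̌_i of g to the fundamental weight of g^σ associated to the orbit of i. -/
theorem LinearMap.apply_sum_fiber_eq_of_apply_eq_ite {R M I ι : Type*} [CommSemiring R]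
    [AddCommMonoid M] [Module R M] [Fintype I] [DecidableEq I] [DecidableEq ι]
    (φ : M →ₗ[R] R) (v : I → M) (i : I) (hφ : ∀ a, φ (v a) = if a = i then 1 else 0)
    (η : I → ι) (j : ι) :
    φ (∑ a ∈ Finset.univ.filter (fun a => η a = j), v a) = if η i = j then 1 else 0 := by
  simp only [map_sum, hφ, Finset.sum_ite_eq', Finset.mem_filter, Finset.mem_univ, true_and]

theorem stmt2_general {I Iσ : Type*} [Fintype I] [DecidableEq I] [DecidableEq Iσ]
    {h : Type*} [AddCommGroup h] [Module ℚ h]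
    -- the normalized Killing form on `h`
    (B : h →ₗ[ℚ] h →ₗ[ℚ] ℚ)
    -- the standard automorphism acting on `h`
    (σ : h ≃ₗ[ℚ] h)
    -- simple coroots and fundamental coweights of `g`
    (αv ωv : I → h)
    -- the folding map `η`
    (η : I → Iσ)
    -- the simply-laced normalization of the Killing form: `(ω̌_i, α̌_a) = δ_{ia}`
    (hB : ∀ i a, B (ωv i) (αv a) = if a = i then 1 else 0)
    -- the fundamental weights `λ_j` of `g^σ`, as functionals on `h` restricting to
    -- the fundamental weights on `h^σ`: `λ_j (β̌_{j'}) = δ_{j j'}` where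
    -- `β̌_j = Σ_{i ∈ η⁻¹(j)} α̌_i` are the simple coroots of `g^σ`
    (Λ : Iσ → (h →ₗ[ℚ] ℚ))
    (hΛ : ∀ j j' : Iσ,
      Λ j (∑ i ∈ Finset.univ.filter (fun i => η i = j'), αv i) = if j' = j then 1 else 0)
    -- the simple coroots `β̌_j` of `g^σ` span the fixed space `h^σ`
    (hspan : ∀ x : h, σ x = x →
      x ∈ Submodule.span ℚ
        (Set.range fun j : Iσ => ∑ i ∈ Finset.univ.filter (fun i => η i = j), αv i)) :
    -- conclusion: `ι(ω̌_i) = λ_{η(i)}` as functionals on `h^σ`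
    ∀ (i : I) (x : h), σ x = x → B (ωv i) x = Λ (η i) x := by
  intro i x hx
  refine LinearMap.eqOn_span ?_ (hspan x hx)
  rintro _ ⟨j, rfl⟩
  rw [(B (ωv i)).apply_sum_fiber_eq_of_apply_eq_ite αv i (hB i) η j, hΛ]
  simp only [eq_comm]

theorem stmt2 {I Iσ : Type*} [Fintype I] [DecidableEq I] [Fintype Iσ] [DecidableEq Iσ]
    {h : Type*} [AddCommGroup h] [Module ℚ h]
    -- the normalized Killing form on `h`
    (B : h →ₗ[ℚ] h →ₗ[ℚ] ℚ)
    -- the standard automorphism acting on `h`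
    (σ : h ≃ₗ[ℚ] h)
    -- simple coroots and fundamental coweights of `g`
    (αv ωv : I → h)
    -- the folding map `η`
    (η : I → Iσ) (hη : Function.Surjective η)
    -- `σ` permutes the simple coroots along the fibers of `η`
    (p : Equiv.Perm I) (hσα : ∀ i, σ (αv i) = αv (p i)) (hpη : ∀ i, η (p i) = η i)
    -- the simply-laced normalization of the Killing form: `(ω̌_i, α̌_a) = δ_{ia}`
    (hB : ∀ i a, B (ωv i) (αv a) = if a = i then 1 else 0)
    -- the fundamental weights `λ_j` of `g^σ`, as functionals on `h` restricting to
    -- the fundamental weights on `h^σ`: `λ_j (β̌_{j'}) = δ_{j j'}` where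
    -- `β̌_j = Σ_{i ∈ η⁻¹(j)} α̌_i` are the simple coroots of `g^σ`
    (Λ : Iσ → (h →ₗ[ℚ] ℚ))
    (hΛ : ∀ j j' : Iσ,
      Λ j (∑ i ∈ Finset.univ.filter (fun i => η i = j'), αv i) = if j' = j then 1 else 0)
    -- the simple coroots `β̌_j` of `g^σ` span the fixed space `h^σ`
    (hspan : ∀ x : h, σ x = x →
      x ∈ Submodule.span ℚ
        (Set.range fun j : Iσ => ∑ i ∈ Finset.univ.filter (fun i => η i = j), αv i)) :
    -- conclusion: `ι(ω̌_i) = λ_{η(i)}` as functionals on `h^σ`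
    ∀ (i : I) (x : h), σ x = x → B (ωv i) x = Λ (η i) x :=
  stmt2_general B σ αv ωv η hB Λ hΛ hspan
end

section
/- Let (g,m) = (A_{2ℓ}, 4) with σ the standard order-4 automorphism, and γ_j ∈ X_*(T)_σ the image of the simple coroot α̌_i for j = η(i). Then ι(γ_j) = β_j for j ≠ ℓ and ι(γ_ℓ) = (1/2)β_ℓ, where β_j are the simple roots of g^σ ≅ C_ℓ. -/
/-!
On `h^σ` the coordinates satisfy `y_k = -y_{2ℓ-k}`; in particular the middle one `y_ℓ` vanishes,
and the roots `α_a` and `α_{2ℓ+1-a}` of an `η`-fiber restrict to the same functional. So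
`(α̌_a, y) = α_a(y) = α_{η(a)}(y)`, which is `β_{η(a)}(y)` away from `ℓ`, while for `η(a) = ℓ` it is
`y_{ℓ-1} - y_ℓ = (1/2) β_ℓ(y)`.
-/

/-- The trace-form pairing `(α̌_a, y)` of the simple coroot `α̌_a = e_{a−1} − e_a`
(1-based `a`) with `y ∈ h`. -/
def corootPair (ℓ : ℕ) (a : ℕ) (y : ℕ → ℚ) : ℚ :=
  ∑ k ∈ Finset.range (2 * ℓ + 1),
    ((if k = a - 1 then 1 else 0) - (if k = a then 1 else 0)) * y k

/-- The simple root `β_j` of `g^σ ≅ C_ℓ` evaluated on `y ∈ h^σ` (1-based `j ≤ ℓ`):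
`β_j = α_j|_{h^σ}` for `j < ℓ`, and `β_ℓ = 2 α_ℓ|_{h^σ}`. -/
def βC (ℓ j : ℕ) (y : ℕ → ℚ) : ℚ :=
  if j = ℓ then 2 * (y (ℓ - 1) - y ℓ) else y (j - 1) - y j

lemma corootPair_eq_sub {ℓ a : ℕ} (ha₁ : 1 ≤ a) (ha₂ : a ≤ 2 * ℓ) (y : ℕ → ℚ) :
    corootPair ℓ a y = y (a - 1) - y a := by
  simp only [corootPair, sub_mul, Finset.sum_sub_distrib, ite_mul, one_mul, zero_mul,
    Finset.sum_ite_eq', Finset.mem_range]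
  rw [if_pos (by omega), if_pos (by omega)]

section Fixed

variable {ℓ : ℕ} {y : ℕ → ℚ} (hfix : ∀ k ≤ 2 * ℓ, y k = -y (2 * ℓ - k))
include hfix

lemma middle_eq_zero_of_fixed : y ℓ = 0 := by
  have h := hfix ℓ (by omega)
  rw [show 2 * ℓ - ℓ = ℓ by omega] at h
  linarith

lemma root_reflect_eq_of_fixed {a : ℕ} (ha₁ : 1 ≤ a) (ha₂ : a ≤ 2 * ℓ) :
    y (2 * ℓ + 1 - a - 1) - y (2 * ℓ + 1 - a) = y (a - 1) - y a := by
  have h₁ := hfix (a - 1) (by omega)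
  have h₂ := hfix a (by omega)
  rw [show 2 * ℓ - (a - 1) = 2 * ℓ + 1 - a by omega] at h₁
  rw [show 2 * ℓ + 1 - a - 1 = 2 * ℓ - a by omega, h₁, h₂]
  ring

end Fixed

theorem stmt3_general (ℓ : ℕ) (y : ℕ → ℚ)
    -- … and is fixed by `σ` (which acts by `y_k ↦ −y_{2ℓ−k}`)
    (hfix : ∀ k ≤ 2 * ℓ, y k = -y (2 * ℓ - k)) :
    ∀ a : ℕ, 1 ≤ a → a ≤ 2 * ℓ →
      corootPair ℓ a y =
        if a = ℓ ∨ a = ℓ + 1 then (1 / 2 : ℚ) * βC ℓ ℓ y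
        else βC ℓ (min a (2 * ℓ + 1 - a)) y := by
  intro a ha₁ ha₂
  have hmid := middle_eq_zero_of_fixed hfix
  have hrefl := root_reflect_eq_of_fixed hfix ha₁ ha₂
  rw [corootPair_eq_sub ha₁ ha₂]
  rcases lt_trichotomy a ℓ with hlt | rfl | hgt
  · rw [if_neg (by omega), βC, min_eq_left (by omega), if_neg (by omega)]
  · simp only [true_or, if_true, βC]
    ring
  · rcases (show a = ℓ + 1 ∨ ℓ + 1 < a by omega) with rfl | hgt'
    · rw [show 2 * ℓ + 1 - (ℓ + 1) = ℓ by omega, show ℓ + 1 - 1 = ℓ by omega, hmid] at hrefl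
      rw [if_pos (Or.inr rfl), βC, if_pos rfl, Nat.add_sub_cancel, hmid]
      linarith
    · rw [if_neg (by omega), βC, min_eq_right (by omega), if_neg (by omega), hrefl]

theorem stmt3 (ℓ : ℕ) (hℓ : 1 ≤ ℓ) (y : ℕ → ℚ)
    -- `y` lies in the Cartan subalgebra of `sl_{2ℓ+1}` …
    (hsum : ∑ k ∈ Finset.range (2 * ℓ + 1), y k = 0)
    -- … and is fixed by `σ` (which acts by `y_k ↦ −y_{2ℓ−k}`)
    (hfix : ∀ k ≤ 2 * ℓ, y k = -y (2 * ℓ - k)) :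
    ∀ a : ℕ, 1 ≤ a → a ≤ 2 * ℓ →
      corootPair ℓ a y =
        if a = ℓ ∨ a = ℓ + 1 then (1 / 2 : ℚ) * βC ℓ ℓ y
        else βC ℓ (min a (2 * ℓ + 1 - a)) y :=
  stmt3_general ℓ y hfix
end

section
/- In the root system of type E_6 (Bourbaki labelling), ω_4 − ω_2 = α_1 + α_2 + 2α_3 + 3α_4 + 2α_5 + α_6 and this element is a positive root; moreover, together with the highest root θ = α_1 + 2α_2 + 2α_3 + 3α_4 + 2α_5 + α_6, the set {α_1, α_3, α_4, α_5, θ, −(ω_4−ω_2)} forms a system of simple roots for E_6. -/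
/-!
STATEMENT 8: In the root system of type `E₆` (Bourbaki labelling),
`ω₄ − ω₂ = α₁ + α₂ + 2α₃ + 3α₄ + 2α₅ + α₆`, and this element is a positive root;
moreover, together with the highest root `θ = α₁ + 2α₂ + 2α₃ + 3α₄ + 2α₅ + α₆`,
the set `{α₁, α₃, α₄, α₅, θ, −(ω₄ − ω₂)}` forms a system of simple roots for `E₆`.

We work in the weight lattice of `E₆` in coordinates with respect to the fundamental
weights `ω₁, …, ω₆` (0-indexed), so that the simple root `α_{j+1}` is given by the
`j`-th column of the Cartan matrix, and roots are the Weyl group orbit of simple roots.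
-/

/-- The Cartan matrix of type `E₆` (Bourbaki labelling, 0-indexed). -/
def cartanE6 : Matrix (Fin 6) (Fin 6) ℤ :=
  !![2, 0, -1, 0, 0, 0;
     0, 2, 0, -1, 0, 0;
     -1, 0, 2, -1, 0, 0;
     0, -1, -1, 2, -1, 0;
     0, 0, 0, -1, 2, -1;
     0, 0, 0, 0, -1, 2]

/-- The simple root `α_{j+1}` in fundamental-weight coordinates. -/
def rt (j : Fin 6) : Fin 6 → ℤ := fun i => cartanE6 i j

/-- The fundamental weight `ω_{i+1}` in fundamental-weight coordinates. -/
def fw (i : Fin 6) : Fin 6 → ℤ := fun j => if j = i then 1 else 0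

/-- The simple reflection `s_{i+1}` acting on the weight lattice, as a self-map:
`s_i λ = λ − ⟨λ, α̌_i⟩ α_i`, and `⟨λ, α̌_i⟩` is the `i`-th fundamental-weight
coordinate of `λ`. -/
def srefl (i : Fin 6) : Function.End (Fin 6 → ℤ) := fun c => c - c i • rt i

/-- `v` is a root iff it lies in the Weyl group orbit of a simple root. -/
def IsRoot (v : Fin 6 → ℤ) : Prop :=
  ∃ f ∈ Submonoid.closure (Set.range srefl), ∃ k, v = f (rt k)

/-- `v` is a positive root iff it is a root which is a nonnegative integral combination
of the simple roots. -/
def IsPositiveRoot (v : Fin 6 → ℤ) : Prop :=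
  IsRoot v ∧ ∃ n : Fin 6 → ℕ, v = ∑ j, (n j : ℤ) • rt j

/-- A system of simple roots (a base): a linearly independent family such that every
root is a nonnegative or nonpositive integral combination of its members. -/
def IsBase (Δ : Fin 6 → (Fin 6 → ℤ)) : Prop :=
  (LinearIndependent ℚ fun k => fun i => ((Δ k i : ℤ) : ℚ)) ∧
    ∀ v, IsRoot v →
      (∃ n : Fin 6 → ℕ, v = ∑ j, (n j : ℤ) • Δ j) ∨
      (∃ n : Fin 6 → ℕ, v = -∑ j, (n j : ℤ) • Δ j)

/-- `β = ω₄ − ω₂`. -/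
def βE6 : Fin 6 → ℤ := fw 3 - fw 1

/-- The highest root `θ = α₁ + 2α₂ + 2α₃ + 3α₄ + 2α₅ + α₆`. -/
def θE6 : Fin 6 → ℤ :=
  rt 0 + 2 • rt 1 + 2 • rt 2 + 3 • rt 3 + 2 • rt 4 + rt 5

/-!
A root is `C n` with `nᵀ C n = 2`, where `C` is the Cartan matrix: simple reflections preserve
this set because `C` is symmetric with diagonal `2`. The form `nᵀ C n` is positive definite and
even, and the off-diagonal entries of `C` are nonpositive, so writing `n = n⁺ - n⁻` the cross
terms only increase the form: if both parts were nonzero, `nᵀ C n ≥ 2 + 2`. Hence every root is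
sign-coherent. The same argument runs in any unimodular change of coordinates `B` whose Gram
matrix `Bᵀ C B` still has nonpositive off-diagonal entries; for `α₁, α₃, α₄, α₅, θ, −β` it is
again the Cartan matrix of `E₆` (the diagram `α₁ – α₃ – α₄ – α₅` with `α₄ – (−β) – θ`).
-/

namespace Matrix

variable {ι : Type*} [Fintype ι]

theorem dotProduct_mulVec_nonpos_of_disjoint {A : Matrix ι ι ℤ}
    (hA : ∀ i j, i ≠ j → A i j ≤ 0) {p r : ι → ℤ} (hp : 0 ≤ p) (hr : 0 ≤ r)
    (hpr : ∀ i, p i = 0 ∨ r i = 0) : p ⬝ᵥ A *ᵥ r ≤ 0 := by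
  simp only [dotProduct, mulVec, Finset.mul_sum]
  refine Finset.sum_nonpos fun i _ => Finset.sum_nonpos fun j _ => ?_
  by_cases hij : i = j
  · subst hij
    rcases hpr i with h | h <;> simp [h]
  · exact mul_nonpos_of_nonneg_of_nonpos (hp i) (mul_nonpos_of_nonpos_of_nonneg (hA i j hij) (hr j))

theorem nonneg_or_nonpos_of_dotProduct_mulVec_eq_two {A : Matrix ι ι ℤ}
    (hA : ∀ i j, i ≠ j → A i j ≤ 0) (h2 : ∀ p ≠ 0, 2 ≤ p ⬝ᵥ A *ᵥ p) {n : ι → ℤ}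
    (hn : n ⬝ᵥ A *ᵥ n = 2) : 0 ≤ n ∨ n ≤ 0 := by
  by_contra! h
  have hsplit : n ⬝ᵥ A *ᵥ n =
      n⁺ ⬝ᵥ A *ᵥ n⁺ + n⁻ ⬝ᵥ A *ᵥ n⁻ - n⁺ ⬝ᵥ A *ᵥ n⁻ - n⁻ ⬝ᵥ A *ᵥ n⁺ := by
    conv_lhs => rw [← posPart_sub_negPart n]
    simp only [mulVec_sub, dotProduct_sub, sub_dotProduct]
    ring
  have hdisj : ∀ i, n⁺ i = 0 ∨ n⁻ i = 0 := fun i =>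
    (le_total (n i) 0).imp posPart_eq_zero.2 negPart_eq_zero.2
  have hpos : n⁺ ≠ 0 := fun h0 => h.2 (posPart_eq_zero.1 h0)
  have hneg : n⁻ ≠ 0 := fun h0 => h.1 (negPart_eq_zero.1 h0)
  linarith [h2 _ hpos, h2 _ hneg,
    dotProduct_mulVec_nonpos_of_disjoint hA (posPart_nonneg n) (negPart_nonneg n) hdisj,
    dotProduct_mulVec_nonpos_of_disjoint hA (negPart_nonneg n) (posPart_nonneg n)
      fun i => (hdisj i).symm]

variable [DecidableEq ι]

theorem dotProduct_mulVec_sub_smul_single {A : Matrix ι ι ℤ} (hA : A.IsSymm) {i : ι}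
    (hi : A i i = 2) (n : ι → ℤ) :
    (n - (A *ᵥ n) i • Pi.single i 1) ⬝ᵥ A *ᵥ (n - (A *ᵥ n) i • Pi.single i 1) =
      n ⬝ᵥ A *ᵥ n := by
  have hcol : n ⬝ᵥ A.col i = (A *ᵥ n) i := by
    rw [← mulVec_single_one, dotProduct_mulVec, dotProduct_single_one, ← mulVec_transpose, hA.eq]
  simp only [mulVec_sub, mulVec_smul, sub_dotProduct, dotProduct_sub, smul_dotProduct,
    dotProduct_smul, hcol, single_one_dotProduct, mulVec_single_one, col_apply, hi, smul_eq_mul]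
  ring

theorem det_ne_zero_of_dotProduct_mulVec_pos {A : Matrix ι ι ℤ}
    (hpos : ∀ p ≠ 0, 0 < p ⬝ᵥ A *ᵥ p) : A.det ≠ 0 := fun hdet => by
  obtain ⟨v, hv, hAv⟩ := exists_mulVec_eq_zero_iff.2 hdet
  simpa [hAv] using hpos v hv

theorem exists_eq_mulVec_natCast_or_neg {A B : Matrix ι ι ℤ} (hB : IsUnit B)
    (hG : ∀ i j, i ≠ j → (Bᵀ * A * B) i j ≤ 0) (h2 : ∀ p ≠ 0, 2 ≤ p ⬝ᵥ A *ᵥ p)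
    {n : ι → ℤ} (hn : n ⬝ᵥ A *ᵥ n = 2) :
    ∃ k : ι → ℕ, n = B *ᵥ (fun j => (k j : ℤ)) ∨ n = -(B *ᵥ fun j => (k j : ℤ)) := by
  obtain ⟨B', hBB'⟩ := hB.exists_right_inv
  have hB'B : B' * B = 1 := mul_eq_one_comm.1 hBB'
  have hgram : ∀ p, p ⬝ᵥ (Bᵀ * A * B) *ᵥ p = (B *ᵥ p) ⬝ᵥ A *ᵥ (B *ᵥ p) := fun p => by
    rw [← mulVec_mulVec, ← mulVec_mulVec, dotProduct_mulVec, vecMul_transpose]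
  set m := B' *ᵥ n
  have hinv : B *ᵥ m = n := by rw [mulVec_mulVec, hBB', one_mulVec]
  have h2' : ∀ p ≠ 0, 2 ≤ p ⬝ᵥ (Bᵀ * A * B) *ᵥ p := fun p hp => by
    refine hgram p ▸ h2 _ fun h0 => hp ?_
    rw [← one_mulVec p, ← hB'B, ← mulVec_mulVec, h0, mulVec_zero]
  have hm : m ⬝ᵥ (Bᵀ * A * B) *ᵥ m = 2 := by rw [hgram, hinv, hn]
  rcases nonneg_or_nonpos_of_dotProduct_mulVec_eq_two hG h2' hm with hm0 | hm0
  · refine ⟨fun j => (m j).toNat, Or.inl ?_⟩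
    rw [← hinv]
    congr 1
    exact funext fun j => (Int.toNat_of_nonneg (hm0 j)).symm
  · refine ⟨fun j => (-m j).toNat, Or.inr ?_⟩
    rw [← hinv, ← mulVec_neg]
    congr 1
    exact funext fun j => by rw [Pi.neg_apply, Int.toNat_of_nonneg (neg_nonneg.2 (hm0 j)), neg_neg]

end Matrix

open Matrix

theorem cartanE6_isSymm : cartanE6.IsSymm := by decide

theorem cartanE6_apply_self (i : Fin 6) : cartanE6 i i = 2 := by
  revert i
  decide

theorem dotProduct_cartanE6_mulVec (p : Fin 6 → ℤ) :
    p ⬝ᵥ cartanE6 *ᵥ p = 2 * (p 0 ^ 2 + p 1 ^ 2 + p 2 ^ 2 + p 3 ^ 2 + p 4 ^ 2 + p 5 ^ 2 -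
      p 0 * p 2 - p 1 * p 3 - p 2 * p 3 - p 3 * p 4 - p 4 * p 5) := by
  simp [dotProduct, mulVec, Fin.sum_univ_six, cartanE6]
  ring

theorem two_le_dotProduct_cartanE6_mulVec {p : Fin 6 → ℤ} (hp : p ≠ 0) :
    2 ≤ p ⬝ᵥ cartanE6 *ᵥ p := by
  rw [dotProduct_cartanE6_mulVec]
  set h := p 0 ^ 2 + p 1 ^ 2 + p 2 ^ 2 + p 3 ^ 2 + p 4 ^ 2 + p 5 ^ 2 -
      p 0 * p 2 - p 1 * p 3 - p 2 * p 3 - p 3 * p 4 - p 4 * p 5 with hh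
  suffices 0 < h by linarith
  by_contra! hle
  -- the LDLᵀ decomposition of the Cartan matrix, cleared of denominators
  have hsos : 12 * h = 3 * (2 * p 0 - p 2) ^ 2 + 3 * (2 * p 1 - p 3) ^ 2 +
      3 * (2 * p 5 - p 4) ^ 2 + (3 * p 2 - 2 * p 3) ^ 2 + (3 * p 4 - 2 * p 3) ^ 2 + p 3 ^ 2 := by
    rw [hh]; ring
  have hsq : ∀ x : ℤ, x ^ 2 ≤ 0 → x = 0 := fun x hx =>
    pow_eq_zero_iff two_ne_zero |>.1 (le_antisymm hx (sq_nonneg x))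
  have s0 := sq_nonneg (2 * p 0 - p 2)
  have s1 := sq_nonneg (2 * p 1 - p 3)
  have s5 := sq_nonneg (2 * p 5 - p 4)
  have s2 := sq_nonneg (3 * p 2 - 2 * p 3)
  have s4 := sq_nonneg (3 * p 4 - 2 * p 3)
  have s3 := sq_nonneg (p 3)
  have e0 := hsq _ (by linarith : (2 * p 0 - p 2) ^ 2 ≤ 0)
  have e1 := hsq _ (by linarith : (2 * p 1 - p 3) ^ 2 ≤ 0)
  have e5 := hsq _ (by linarith : (2 * p 5 - p 4) ^ 2 ≤ 0)
  have e2 := hsq _ (by linarith : (3 * p 2 - 2 * p 3) ^ 2 ≤ 0)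
  have e4 := hsq _ (by linarith : (3 * p 4 - 2 * p 3) ^ 2 ≤ 0)
  have e3 := hsq _ (by linarith : p 3 ^ 2 ≤ 0)
  exact hp (funext fun i => by fin_cases i <;> simp <;> omega)

theorem rt_eq_cartanE6_mulVec_single (k : Fin 6) : rt k = cartanE6 *ᵥ Pi.single k 1 := by
  rw [mulVec_single_one]
  rfl

theorem srefl_cartanE6_mulVec (i : Fin 6) (n : Fin 6 → ℤ) :
    srefl i (cartanE6 *ᵥ n) = cartanE6 *ᵥ (n - (cartanE6 *ᵥ n) i • Pi.single i 1) := by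
  rw [mulVec_sub, mulVec_smul, ← rt_eq_cartanE6_mulVec_single]
  rfl

theorem IsRoot.exists_eq_cartanE6_mulVec {v : Fin 6 → ℤ} (hv : IsRoot v) :
    ∃ n, v = cartanE6 *ᵥ n ∧ n ⬝ᵥ cartanE6 *ᵥ n = 2 := by
  obtain ⟨f, hf, k, rfl⟩ := hv
  rw [rt_eq_cartanE6_mulVec_single]
  suffices ∀ n, n ⬝ᵥ cartanE6 *ᵥ n = 2 →
      ∃ n', f (cartanE6 *ᵥ n) = cartanE6 *ᵥ n' ∧ n' ⬝ᵥ cartanE6 *ᵥ n' = 2 by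
    refine this _ ?_
    rw [mulVec_single_one, single_one_dotProduct, col_apply, cartanE6_apply_self]
  induction hf using Submonoid.closure_induction with
  | mem f hf =>
    obtain ⟨i, rfl⟩ := hf
    exact fun n hn => ⟨_, srefl_cartanE6_mulVec i n,
      (dotProduct_mulVec_sub_smul_single cartanE6_isSymm (cartanE6_apply_self i) n).trans hn⟩
  | one => exact fun n hn => ⟨n, rfl, hn⟩
  | mul f g _ _ hf hg =>
    intro n hn
    obtain ⟨n₁, h₁, hn₁⟩ := hg n hn
    obtain ⟨n₂, h₂, hn₂⟩ := hf n₁ hn₁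
    exact ⟨n₂, (congrArg f h₁).trans h₂, hn₂⟩

theorem isRoot_βE6 : IsRoot βE6 :=
  ⟨([3, 4, 5, 2, 3, 4, 1, 3, 2].map srefl).prod,
    Submonoid.list_prod_mem _ fun _ hf => by
      obtain ⟨i, -, rfl⟩ := List.mem_map.1 hf
      exact Submonoid.subset_closure ⟨i, rfl⟩,
    0, by decide⟩

theorem isBase_col_cartanE6_mul {B : Matrix (Fin 6) (Fin 6) ℤ} (hB : IsUnit B)
    (hG : ∀ i j, i ≠ j → (Bᵀ * cartanE6 * B) i j ≤ 0) : IsBase (cartanE6 * B).col := by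
  refine ⟨?_, fun v hv => ?_⟩
  · have hdet : (cartanE6 * B).det ≠ 0 := by
      rw [det_mul]
      refine mul_ne_zero (det_ne_zero_of_dotProduct_mulVec_pos fun p hp => ?_)
        ((isUnit_iff_isUnit_det B).1 hB).ne_zero
      linarith [two_le_dotProduct_cartanE6_mulVec hp]
    show LinearIndependent ℚ ((Int.castRingHom ℚ).mapMatrix (cartanE6 * B)).col
    rw [linearIndependent_cols_iff_isUnit, isUnit_iff_isUnit_det, ← RingHom.map_det]
    exact isUnit_iff_ne_zero.2 (Int.cast_ne_zero.2 hdet)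
  · obtain ⟨n, rfl, hn⟩ := hv.exists_eq_cartanE6_mulVec
    obtain ⟨k, hk | hk⟩ :=
      exists_eq_mulVec_natCast_or_neg hB hG (fun p => two_le_dotProduct_cartanE6_mulVec) hn
    · refine Or.inl ⟨k, ?_⟩
      rw [hk, mulVec_mulVec, mulVec_eq_sum]
      simp only [op_smul_eq_smul]
      rfl
    · refine Or.inr ⟨k, ?_⟩
      rw [hk, mulVec_neg, mulVec_mulVec, mulVec_eq_sum]
      simp only [op_smul_eq_smul]
      rfl

/-- The columns are `α₁, α₃, α₄, α₅, θ, -β` in simple-root coordinates. -/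
def newBaseE6 : Matrix (Fin 6) (Fin 6) ℤ :=
  !![1, 0, 0, 0, 1, -1;
     0, 0, 0, 0, 2, -1;
     0, 1, 0, 0, 2, -2;
     0, 0, 1, 0, 3, -3;
     0, 0, 0, 1, 2, -2;
     0, 0, 0, 0, 1, -1]

theorem isUnit_newBaseE6 : IsUnit newBaseE6 := by
  rw [isUnit_iff_isUnit_det]
  simp [newBaseE6, det_succ_row_zero, Fin.sum_univ_succ, Fin.succAbove]

theorem newBaseE6_gram_nonpos : ∀ i j, i ≠ j → (newBaseE6ᵀ * cartanE6 * newBaseE6) i j ≤ 0 := by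
  decide

theorem col_cartanE6_mul_newBaseE6 :
    (cartanE6 * newBaseE6).col = ![rt 0, rt 2, rt 3, rt 4, θE6, -βE6] := by
  decide

theorem stmt8 :
    βE6 = rt 0 + rt 1 + 2 • rt 2 + 3 • rt 3 + 2 • rt 4 + rt 5 ∧
    IsPositiveRoot βE6 ∧
    IsBase ![rt 0, rt 2, rt 3, rt 4, θE6, -βE6] := by
  refine ⟨by decide, ⟨isRoot_βE6, ![1, 1, 2, 3, 2, 1], by decide⟩, ?_⟩
  rw [← col_cartanE6_mul_newBaseE6]
  exact isBase_col_cartanE6_mul isUnit_newBaseE6 newBaseE6_gram_nonpos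
end

section
/- Let X be the root lattice of B_ℓ viewed inside its weight lattice with fundamental weights ϖ_1,…,ϖ_ℓ and simple roots γ_1,…,γ_ℓ (γ_ℓ short). Suppose λ, μ are dominant elements of X with μ ≺ λ a cover relation in the dominance order such that γ_ℓ occurs in λ − μ. Then either (1) λ − μ = γ_ℓ and ⟨μ, γ̌_ℓ⟩ ≠ 0, or (2) λ − μ = γ_i + γ_{i+1} + ⋯ + γ_ℓ for some 1 ≤ i ≤ ℓ and μ = Σ_{k<i} a_k ϖ_k with a_k ∈ ℤ_{≥0}. -/
/-!
STATEMENT 15: Refinement of Stembridge's theorem for `B_ℓ`.  We work in the standard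
`ε`-coordinates: the root lattice `X` of `B_ℓ` is `ℤ^ℓ`, the simple roots are
`γ_i = e_i − e_{i+1}` (`i < ℓ`) and `γ_ℓ = e_ℓ` (short), the relevant fundamental
weights are `ϖ_k = e_1 + ⋯ + e_k` (`k < ℓ`), a vector is dominant iff its coordinates
are weakly decreasing and nonnegative, and `μ ⪯ λ` iff `λ − μ` is a nonnegative
integral combination of the `γ_i`.  If `μ ≺ λ` is a cover relation among dominant
elements of `X` in which `γ_ℓ` occurs, then either
(1) `λ − μ = γ_ℓ` and `⟨μ, γ̌_ℓ⟩ ≠ 0` (`γ̌_ℓ = 2 e_ℓ`), or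
(2) `λ − μ = γ_i + ⋯ + γ_ℓ` for some `i` and `μ = Σ_{k<i} a_k ϖ_k`, `a_k ∈ ℕ`.
-/

/-- The simple root `γ_{i+1}` of `B_ℓ` in `ε`-coordinates
(`e_i − e_{i+1}` for `i+1 < ℓ`, and `e_ℓ` for the last index). -/
def γB (ℓ : ℕ) (i : Fin ℓ) : Fin ℓ → ℤ :=
  fun j => (if j = i then 1 else 0) - (if (j : ℕ) = (i : ℕ) + 1 then 1 else 0)

/-- The (non-spin) fundamental weight `ϖ_{k+1} = e_1 + ⋯ + e_{k+1}` of `B_ℓ`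
(valid for `k+1 < ℓ`; only these occur below). -/
def ϖB (ℓ : ℕ) (k : Fin ℓ) : Fin ℓ → ℤ := fun j => if (j : ℕ) ≤ (k : ℕ) then 1 else 0

/-- The coroot `γ̌_ℓ = 2 e_ℓ` of the short simple root. -/
def coγℓ (ℓ : ℕ) : Fin ℓ → ℤ := fun j => if (j : ℕ) + 1 = ℓ then 2 else 0

/-- Dominance in `ε`-coordinates: weakly decreasing and nonnegative. -/
def IsDomB (ℓ : ℕ) (lam : Fin ℓ → ℤ) : Prop :=
  (∀ i j : Fin ℓ, i ≤ j → lam j ≤ lam i) ∧ ∀ i, 0 ≤ lam i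

/-- The dominance order `μ ⪯ λ`. -/
def DomLE (ℓ : ℕ) (μ lam : Fin ℓ → ℤ) : Prop :=
  ∃ c : Fin ℓ → ℕ, lam - μ = ∑ j, (c j : ℤ) • γB ℓ j

/-- `μ ≺ λ` is a cover relation in the dominance order on dominant elements. -/
def CoversB (ℓ : ℕ) (μ lam : Fin ℓ → ℤ) : Prop :=
  DomLE ℓ μ lam ∧ μ ≠ lam ∧
    ¬∃ ν : Fin ℓ → ℤ, IsDomB ℓ ν ∧ DomLE ℓ μ ν ∧ DomLE ℓ ν lam ∧ ν ≠ μ ∧ ν ≠ lam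

/-!
The dominance order is read off from partial sums: `λ − μ = Σ c_j γ_j` with
`c_n = (λ_1 + ⋯ + λ_n) − (μ_1 + ⋯ + μ_n)`, so `μ ⪯ λ` iff all these partial sums are nonnegative,
and `γ_ℓ` occurs in `λ − μ` iff `|μ| < |λ|` for the coordinate sums.

Let `i` be the last index with `λ_i > 0`. Then `λ − e_i` is dominant and still dominates `μ`,
because from `i` on its partial sums are at least `|λ| − |μ| − 1 ≥ 0`. The cover relation forces
`μ = λ − e_i`, i.e. `λ − μ = e_i = γ_i + ⋯ + γ_ℓ`. If `μ_i = 0`, then `μ` vanishes from `i` on and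
is a nonnegative combination of `ϖ_1, …, ϖ_{i−1}`: case (2). If `μ_i > 0` and `i < ℓ`, then
`μ + e_{i+1}` lies strictly between `μ` and `λ`; so `i = ℓ` and `⟨μ, γ̌_ℓ⟩ = 2 μ_ℓ ≠ 0`: case (1).
-/

variable {ℓ : ℕ}

lemma Fintype.exists_pos_forall_gt_eq_zero_of_sum_pos {α : Type*} [Fintype α] [LinearOrder α]
    {f : α → ℤ} (hf : ∀ a, 0 ≤ f a) (hsum : 0 < ∑ a, f a) : ∃ i, 0 < f i ∧ ∀ j, i < j → f j = 0 := by
  have hne : (Finset.univ.filter fun a => 0 < f a).Nonempty := by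
    by_contra h
    simp only [Finset.filter_nonempty_iff, Finset.mem_univ, true_and, not_exists, not_lt] at h
    exact hsum.not_ge (Finset.sum_nonpos fun a _ => h a)
  refine ⟨_, (Finset.mem_filter.1 (Finset.max'_mem _ hne)).2, fun j hj => ?_⟩
  by_contra hfj
  exact hj.not_ge (Finset.le_max' _ j (by simpa using (hf j).lt_of_ne' hfj))

def partialSum : (Fin ℓ → ℤ) →+ (Fin ℓ → ℤ) :=
  AddMonoidHom.mk' (fun v n => ∑ k ∈ Finset.Iic n, v k) fun v w => by
    ext n; simp [Finset.sum_add_distrib]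

@[simp]
lemma partialSum_apply (v : Fin ℓ → ℤ) (n : Fin ℓ) :
    partialSum v n = ∑ k ∈ Finset.Iic n, v k := rfl

lemma partialSum_injective : Function.Injective (partialSum (ℓ := ℓ)) := by
  refine (injective_iff_map_eq_zero _).2 fun v hv => funext fun k => ?_
  induction k using WellFoundedLT.induction with
  | _ k ih =>
    have hk := congrFun hv k
    rwa [partialSum_apply, ← Finset.Iio_insert, Finset.sum_insert Finset.notMem_Iio_self,
      Finset.sum_eq_zero fun j hj => ih j (Finset.mem_Iio.1 hj), add_zero] at hk

lemma partialSum_last (v : Fin ℓ → ℤ) (h : ℓ - 1 < ℓ) :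
    partialSum v ⟨ℓ - 1, h⟩ = ∑ k, v k := by
  rw [partialSum_apply]
  congr 1
  exact Finset.eq_univ_of_forall fun k => Finset.mem_Iic.2 (Fin.le_def.2 (by simp; omega))

lemma partialSum_single (a n : Fin ℓ) :
    partialSum (Pi.single a 1) n = if a ≤ n then 1 else 0 := by
  simp [Pi.single_apply]

lemma partialSum_γB (i n : Fin ℓ) : partialSum (γB ℓ i) n = if i = n then 1 else 0 := by
  have hnext : ∑ k ∈ Finset.Iic n, (if (k : ℕ) = i + 1 then 1 else 0 : ℤ) =
      if i < n then 1 else 0 := by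
    split_ifs with h
    · rw [Finset.sum_eq_single_of_mem ⟨i + 1, by omega⟩ (Finset.mem_Iic.2 h), if_pos rfl]
      exact fun k _ hk => if_neg fun hk' => hk (Fin.ext hk')
    · refine Finset.sum_eq_zero fun k hk => if_neg ?_
      have := Finset.mem_Iic.1 hk
      omega
  simp only [partialSum_apply, γB]
  rw [Finset.sum_sub_distrib, Finset.sum_ite_eq', hnext]
  simp only [Finset.mem_Iic]
  split_ifs <;> omega

lemma partialSum_sum_smul_γB (c : Fin ℓ → ℤ) (n : Fin ℓ) :
    partialSum (∑ j, c j • γB ℓ j) n = c n := by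
  simp only [map_sum, map_zsmul, Finset.sum_apply, Pi.smul_apply, partialSum_γB, smul_eq_mul,
    mul_ite, mul_one, mul_zero, Finset.sum_ite_eq', Finset.mem_univ, if_true]

lemma sum_filter_le_γB (i : Fin ℓ) :
    ∑ j ∈ Finset.univ.filter (fun j => i ≤ j), γB ℓ j = Pi.single i 1 := by
  have hsmul : ∑ j ∈ Finset.univ.filter (fun j => i ≤ j), γB ℓ j =
      ∑ j, (if i ≤ j then 1 else 0 : ℤ) • γB ℓ j := by
    simp only [Finset.sum_filter, ite_smul, one_smul, zero_smul]
  refine partialSum_injective (funext fun n => ?_)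
  rw [hsmul, partialSum_sum_smul_γB, partialSum_single]

lemma γB_last (h : ℓ - 1 < ℓ) : γB ℓ ⟨ℓ - 1, h⟩ = Pi.single ⟨ℓ - 1, h⟩ 1 := by
  ext j
  simp only [γB, Pi.single_apply]
  split_ifs <;> omega

lemma sum_mul_coγℓ (μ : Fin ℓ → ℤ) (h : ℓ - 1 < ℓ) :
    ∑ j, μ j * coγℓ ℓ j = 2 * μ ⟨ℓ - 1, h⟩ := by
  rw [Finset.sum_eq_single ⟨ℓ - 1, h⟩]
  · simp [coγℓ, mul_comm, show ℓ - 1 + 1 = ℓ by omega]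
  · intro j _ hj
    rw [coγℓ, if_neg fun h' => hj (Fin.ext (by simp; omega)), mul_zero]
  · simp

lemma domLE_iff_partialSum_nonneg {μ lam : Fin ℓ → ℤ} :
    DomLE ℓ μ lam ↔ ∀ n, 0 ≤ partialSum (lam - μ) n := by
  constructor
  · rintro ⟨c, hc⟩ n
    rw [hc, partialSum_sum_smul_γB]
    positivity
  · intro h
    refine ⟨fun n => (partialSum (lam - μ) n).toNat, partialSum_injective (funext fun n => ?_)⟩
    rw [partialSum_sum_smul_γB, Int.toNat_of_nonneg (h n)]

lemma domLE_add_single (μ : Fin ℓ → ℤ) (i : Fin ℓ) : DomLE ℓ μ (μ + Pi.single i 1) := by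
  rw [domLE_iff_partialSum_nonneg]
  intro n
  rw [add_sub_cancel_left, partialSum_single]
  positivity

lemma domLE_add_single_add_single (μ : Fin ℓ → ℤ) {i j : Fin ℓ} (hij : i ≤ j) :
    DomLE ℓ (μ + Pi.single j 1) (μ + Pi.single i 1) := by
  rw [domLE_iff_partialSum_nonneg]
  intro n
  rw [add_sub_add_left_eq_sub, map_sub, Pi.sub_apply, partialSum_single, partialSum_single]
  split_ifs <;> omega

lemma DomLE.sub_single {μ lam : Fin ℓ → ℤ} (hle : DomLE ℓ μ lam) (hμ : ∀ k, 0 ≤ μ k) {i : Fin ℓ}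
    (hzero : ∀ j, i < j → lam j = 0) (hsum : ∑ k, μ k < ∑ k, lam k) :
    DomLE ℓ μ (lam - Pi.single i 1) := by
  rw [domLE_iff_partialSum_nonneg] at hle ⊢
  intro n
  rw [sub_right_comm, map_sub, Pi.sub_apply, partialSum_single]
  split_ifs with hin
  · have hlam : ∑ k ∈ Finset.Iic n, lam k = ∑ k, lam k :=
      Finset.sum_subset (Finset.subset_univ _) fun j _ hj =>
        hzero j (hin.trans_lt (not_le.1 (by simpa using hj)))
    have hμle : ∑ k ∈ Finset.Iic n, μ k ≤ ∑ k, μ k := Finset.sum_le_univ_sum_of_nonneg hμ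
    simp only [partialSum_apply, Pi.sub_apply, Finset.sum_sub_distrib, hlam]
    omega
  · simpa using hle n

lemma IsDomB.sub_single {lam : Fin ℓ → ℤ} (h : IsDomB ℓ lam) {i : Fin ℓ} (hpos : 0 < lam i)
    (hlt : ∀ j, i < j → lam j < lam i) : IsDomB ℓ (lam - Pi.single i 1) := by
  refine ⟨fun p q hpq => ?_, fun k => ?_⟩
  · have hmono := h.1 p q hpq
    simp only [Pi.sub_apply, Pi.single_apply]
    split_ifs with hq hp hp
    · subst hq hp; rfl
    · omega
    · subst hp; have := hlt q (lt_of_le_of_ne hpq (Ne.symm hq)); omega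
    · omega
  · have := h.2 k
    simp only [Pi.sub_apply, Pi.single_apply]
    split_ifs with hk
    · subst hk; omega
    · omega

lemma IsDomB.add_single {μ : Fin ℓ → ℤ} (h : IsDomB ℓ μ) {i : Fin ℓ}
    (hlt : ∀ j, j < i → μ i < μ j) : IsDomB ℓ (μ + Pi.single i 1) := by
  refine ⟨fun p q hpq => ?_, fun k => ?_⟩
  · have hmono := h.1 p q hpq
    simp only [Pi.add_apply, Pi.single_apply]
    split_ifs with hq hp hp
    · subst hq hp; rfl
    · subst hq; have := hlt p (lt_of_le_of_ne hpq hp); omega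
    · omega
    · omega
  · have := h.2 k
    simp only [Pi.add_apply, Pi.single_apply]
    split_ifs <;> omega

lemma IsDomB.exists_eq_sum_ϖB {μ : Fin ℓ → ℤ} (h : IsDomB ℓ μ) {i : Fin ℓ} (hi : μ i = 0) :
    ∃ a : Fin ℓ → ℕ, μ = ∑ k ∈ Finset.univ.filter (fun k => k < i), (a k : ℤ) • ϖB ℓ k := by
  -- `μ` extended by zero, so that `μ_k − μ_{k+1}` also makes sense at the last index
  set F : ℕ → ℤ := fun n => if hn : n < ℓ then μ ⟨n, hn⟩ else 0
  have hF : ∀ k : Fin ℓ, F k = μ k := fun k => dif_pos k.isLt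
  have hFanti : ∀ k : Fin ℓ, F (k + 1) ≤ F k := fun k => by
    rw [hF]
    by_cases hk : (k : ℕ) + 1 < ℓ
    · simpa [F, hk] using h.1 k ⟨k + 1, hk⟩ (Fin.le_def.2 (Nat.le_succ _))
    · simpa [F, hk] using h.2 k
  refine ⟨fun k => (F k - F (k + 1)).toNat, funext fun j => ?_⟩
  have hcoord : (∑ k ∈ Finset.univ.filter (fun k => k < i),
      ((F k - F (k + 1)).toNat : ℤ) • ϖB ℓ k) j = ∑ k ∈ Finset.Ico j i, (F k - F (k + 1)) := by
    simp only [Finset.sum_apply, Pi.smul_apply, ϖB, smul_eq_mul, mul_ite, mul_one, mul_zero,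
      Int.toNat_of_nonneg (sub_nonneg.2 (hFanti _))]
    rw [← Finset.sum_filter, Finset.filter_filter]
    congr 1
    exact Finset.ext fun k => by simp [and_comm]
  rw [hcoord]
  rcases lt_or_ge j i with hji | hij
  · have hval : ∑ k ∈ Finset.Ico j i, (F k - F (k + 1)) =
        ∑ n ∈ Finset.Ico (j : ℕ) i, (F n - F (n + 1)) := by
      rw [← Fin.map_valEmbedding_Ico, Finset.sum_map]
      rfl
    rw [hval, Finset.sum_congr rfl fun n _ => (neg_sub (F (n + 1)) (F n)).symm,
      Finset.sum_neg_distrib, Finset.sum_Ico_sub F (Fin.le_def.1 hji.le), hF, hF, hi]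
    ring
  · rw [Finset.Ico_eq_empty_of_le hij, Finset.sum_empty]
    exact le_antisymm (hi ▸ h.1 i j hij) (h.2 j)

lemma CoversB.eq_of_between {μ lam ν : Fin ℓ → ℤ} (hcov : CoversB ℓ μ lam) (hν : IsDomB ℓ ν)
    (hμν : DomLE ℓ μ ν) (hνlam : DomLE ℓ ν lam) (hne : ν ≠ lam) : ν = μ :=
  by_contra fun h => hcov.2.2 ⟨ν, hν, hμν, hνlam, h, hne⟩

lemma CoversB.eq_add_single {μ lam : Fin ℓ → ℤ} (hcov : CoversB ℓ μ lam) (hdlam : IsDomB ℓ lam)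
    (hdμ : IsDomB ℓ μ) {i : Fin ℓ} (hpos : 0 < lam i) (hzero : ∀ j, i < j → lam j = 0)
    (hsum : ∑ k, μ k < ∑ k, lam k) : lam = μ + Pi.single i 1 := by
  have hν : IsDomB ℓ (lam - Pi.single i 1) :=
    hdlam.sub_single hpos fun j hj => (hzero j hj).trans_lt hpos
  have hνlam : DomLE ℓ (lam - Pi.single i 1) lam := by
    have := domLE_add_single (lam - Pi.single i 1) i
    rwa [sub_add_cancel] at this
  have hne : lam - Pi.single i 1 ≠ lam := fun h => by simpa using congrFun h i
  rw [← hcov.eq_of_between hν (hcov.1.sub_single hdμ.2 hzero hsum) hνlam hne, sub_add_cancel]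

lemma CoversB.apply_eq_zero {μ : Fin ℓ → ℤ} {i : Fin ℓ} (hcov : CoversB ℓ μ (μ + Pi.single i 1))
    (hdμ : IsDomB ℓ μ) (hzero : ∀ j, i < j → μ j = 0) (hi : (i : ℕ) + 1 < ℓ) : μ i = 0 := by
  by_contra hμi
  set i' : Fin ℓ := ⟨i + 1, hi⟩
  have hii' : i < i' := Fin.lt_def.2 (Nat.lt_succ_self _)
  have hν : IsDomB ℓ (μ + Pi.single i' 1) := by
    refine hdμ.add_single fun j hj => ?_
    rw [hzero i' hii']
    have := hdμ.1 j i (Fin.le_def.2 (by simp [i', Fin.lt_def] at hj; omega))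
    have := hdμ.2 i
    omega
  have hne : μ + Pi.single i' 1 ≠ μ + Pi.single i 1 := fun h => by
    simpa [hii'.ne'] using congrFun h i'
  have := hcov.eq_of_between hν (domLE_add_single μ i')
    (domLE_add_single_add_single μ hii'.le) hne
  simpa using congrFun this i'

theorem stmt15 (ℓ : ℕ) (hℓ : 0 < ℓ) (lam μ : Fin ℓ → ℤ)
    (hdlam : IsDomB ℓ lam) (hdμ : IsDomB ℓ μ)
    (hcov : CoversB ℓ μ lam)
    -- `γ_ℓ` occurs in `λ − μ`:
    (hshort : ∃ c : Fin ℓ → ℕ,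
      lam - μ = ∑ j, (c j : ℤ) • γB ℓ j ∧ 0 < c ⟨ℓ - 1, by omega⟩) :
    (lam - μ = γB ℓ ⟨ℓ - 1, by omega⟩ ∧ (∑ j, μ j * coγℓ ℓ j) ≠ 0) ∨
    (∃ i : Fin ℓ,
      lam - μ = ∑ j ∈ Finset.univ.filter (fun j => i ≤ j), γB ℓ j ∧
      ∃ a : Fin ℓ → ℕ,
        μ = ∑ k ∈ Finset.univ.filter (fun k => k < i), (a k : ℤ) • ϖB ℓ k) := by
  have hlast : ℓ - 1 < ℓ := by omega
  have hsum : ∑ k, μ k < ∑ k, lam k := by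
    obtain ⟨c, hc, hc_last⟩ := hshort
    have h := partialSum_sum_smul_γB (fun j => (c j : ℤ)) ⟨ℓ - 1, hlast⟩
    rw [← hc, partialSum_last] at h
    simp only [Pi.sub_apply, Finset.sum_sub_distrib] at h
    omega
  obtain ⟨i, hpos, hzero⟩ := Fintype.exists_pos_forall_gt_eq_zero_of_sum_pos hdlam.2
    ((Finset.sum_nonneg fun k _ => hdμ.2 k).trans_lt hsum)
  have hlam := hcov.eq_add_single hdlam hdμ hpos hzero hsum
  have hμzero : ∀ j, i < j → μ j = 0 := fun j hj => by
    simpa [hlam, Pi.single_apply, hj.ne'] using hzero j hj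
  subst hlam
  by_cases hμi : μ i = 0
  · exact Or.inr ⟨i, (add_sub_cancel_left μ _).trans (sum_filter_le_γB i).symm,
      hdμ.exists_eq_sum_ϖB hμi⟩
  · have hi : (i : ℕ) = ℓ - 1 := by
      by_contra h
      exact hμi (hcov.apply_eq_zero hdμ hμzero (by omega))
    obtain rfl : i = ⟨ℓ - 1, hlast⟩ := Fin.ext hi
    refine Or.inl ⟨(add_sub_cancel_left μ _).trans (γB_last hlast).symm, ?_⟩
    rw [sum_mul_coγℓ μ hlast]
    omega
end
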